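/- Toffoli–Pauli conjugation identity: for all bits x₁, x₂, x₃, z₁, z₂, z₃ ∈ {0,1}, the following identity of 8×8 complex matrices holds: T · (Z^{z₁}X^{x₁} ⊗ Z^{z₂}X^{x₂} ⊗ Z^{z₃}X^{x₃}) = CNOT₁₃^{x₂} · CNOT₂₃^{x₁} · (I⊗H⊗I) · CNOT₁₂^{z₃} · (I⊗H⊗I) · (Z^{z₁+x₂z₃}X^{x₁} ⊗ Z^{z₂+x₁z₃}X^{x₂} ⊗ Z^{z₃}X^{x₁x₂+x₃}) · T, where exponents are natural numbers (equivalently taken mod 2, since X² = Z² = I). -/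
import Mathlib


open Matrix
open scoped Kronecker

/-- The Pauli `X` gate: `X = [[0,1],[1,0]]`. -/
def PX : Matrix Bool Bool ℂ := fun i j => if i = j then 0 else 1

/-- The Pauli `Z` gate: `Z = [[1,0],[0,−1]]`. -/
def PZ : Matrix Bool Bool ℂ := Matrix.diagonal (fun b => if b then -1 else 1)

/-- The Hadamard gate `H = (1/√2)·[[1,1],[1,−1]]`. -/
noncomputable def PH : Matrix Bool Bool ℂ :=
  fun i j => ((1 / Real.sqrt 2 : ℝ) : ℂ) * (if i && j then -1 else 1)

/-- The Toffoli gate: `T|a,b,c⟩ = |a,b,c⊕ab⟩`. -/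
def Toffoli : Matrix ((Bool × Bool) × Bool) ((Bool × Bool) × Bool) ℂ :=
  fun i j => if i = (j.1, xor j.2 (j.1.1 && j.1.2)) then 1 else 0

/-- `CNOT₁₂|a,b,c⟩ = |a,b⊕a,c⟩`. -/
def CNOT12 : Matrix ((Bool × Bool) × Bool) ((Bool × Bool) × Bool) ℂ :=
  fun i j => if i = ((j.1.1, xor j.1.2 j.1.1), j.2) then 1 else 0

/-- `CNOT₁₃|a,b,c⟩ = |a,b,c⊕a⟩`. -/
def CNOT13 : Matrix ((Bool × Bool) × Bool) ((Bool × Bool) × Bool) ℂ :=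
  fun i j => if i = (j.1, xor j.2 j.1.1) then 1 else 0

/-- `CNOT₂₃|a,b,c⟩ = |a,b,c⊕b⟩`. -/
def CNOT23 : Matrix ((Bool × Bool) × Bool) ((Bool × Bool) × Bool) ℂ :=
  fun i j => if i = (j.1, xor j.2 j.1.2) then 1 else 0

/-! ### Auxiliary machinery: signed permutation matrices -/

def sgn (b : Bool) : ℂ := if b then -1 else 1

lemma sgn_mul (a b : Bool) : sgn a * sgn b = sgn (xor a b) := by
  cases a <;> cases b <;> simp [sgn]

def pm {α : Type*} [DecidableEq α] (f : α → α) (p : α → Bool) : Matrix α α ℂ :=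
  Matrix.of fun i j => if i = f j then sgn (p j) else 0

lemma pm_mul {α : Type*} [Fintype α] [DecidableEq α] (f g : α → α) (p q : α → Bool) :
    pm f p * pm g q = pm (f ∘ g) (fun j => xor (p (g j)) (q j)) := by
  ext i j
  simp only [pm, of_apply, Matrix.mul_apply, ite_mul, zero_mul, Function.comp]
  rw [Finset.sum_eq_single (g j)]
  · simp [sgn_mul]
  · intro k _ hk; simp [hk]
  · simp

lemma pm_kron {α β : Type*} [DecidableEq α] [DecidableEq β]
    (f : α → α) (g : β → β) (p : α → Bool) (q : β → Bool) :
    pm f p ⊗ₖ pm g q = pm (Prod.map f g) (fun j => xor (p j.1) (q j.2)) := by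
  ext ⟨i1,i2⟩ ⟨j1,j2⟩
  simp only [pm, kroneckerMap_apply, of_apply, Prod.map, Prod.mk.injEq, Prod.ext_iff]
  by_cases h1 : i1 = f j1 <;> by_cases h2 : i2 = g j2 <;> simp [h1, h2, sgn_mul]

lemma pm_congr {α : Type*} [DecidableEq α] {f g : α → α} {p q : α → Bool}
    (hf : f = g) (hp : p = q) : pm f p = pm g q := by rw [hf, hp]

lemma PX_pm : PX = pm Bool.not (fun _ => false) := by
  ext i j; cases i <;> cases j <;> simp [PX, pm, sgn]

lemma PZ_pm : PZ = pm id (fun b => b) := by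
  ext i j; cases i <;> cases j <;> simp [PZ, pm, sgn, Matrix.diagonal]

lemma one_pm {α : Type*} [DecidableEq α] : (1 : Matrix α α ℂ) = pm id (fun _ => false) := by
  ext i j; by_cases h : i = j <;> simp [pm, sgn, h, Matrix.one_apply]

lemma Toffoli_pm : Toffoli = pm (fun j => (j.1, xor j.2 (j.1.1 && j.1.2))) (fun _ => false) := by
  ext i j; simp [Toffoli, pm, sgn]

lemma CNOT13_pm : CNOT13 = pm (fun j => (j.1, xor j.2 j.1.1)) (fun _ => false) := by
  ext i j; simp [CNOT13, pm, sgn]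

lemma CNOT23_pm : CNOT23 = pm (fun j => (j.1, xor j.2 j.1.2)) (fun _ => false) := by
  ext i j; simp [CNOT23, pm, sgn]

noncomputable def M : Matrix ((Bool × Bool) × Bool) ((Bool × Bool) × Bool) ℂ :=
  (1 : Matrix Bool Bool ℂ) ⊗ₖ PH ⊗ₖ (1 : Matrix Bool Bool ℂ)

set_option linter.unreachableTactic false in
set_option linter.unusedTactic false in
lemma MM : M * M = 1 := by
  ext ⟨⟨a,b⟩,c⟩ ⟨⟨d,e⟩,f⟩
  have h2 : ((Real.sqrt 2 : ℝ) : ℂ) * ((Real.sqrt 2 : ℝ) : ℂ) = 2 := by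
    rw [← Complex.ofReal_mul, Real.mul_self_sqrt] <;> norm_num
  simp only [M, Matrix.mul_apply, kroneckerMap_apply, Fintype.sum_prod_type, PH,
    Matrix.one_apply, Fintype.sum_bool]
  rcases a <;> rcases b <;> rcases c <;> rcases d <;> rcases e <;> rcases f <;>
    simp <;> field_simp <;> ring_nf <;> simp [h2, sq] <;> norm_num

noncomputable def CZ : Matrix ((Bool × Bool) × Bool) ((Bool × Bool) × Bool) ℂ :=
  pm id (fun j => j.1.1 && j.1.2)

lemma CM : CNOT12 * M = M * CZ := by
  ext ⟨⟨a,b⟩,c⟩ ⟨⟨d,e⟩,f⟩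
  simp only [M, CZ, Matrix.mul_apply, kroneckerMap_apply, Fintype.sum_prod_type, PH, CNOT12, pm,
    sgn, Matrix.one_apply, Fintype.sum_bool, Matrix.of_apply]
  rcases a <;> rcases b <;> rcases c <;> rcases d <;> rcases e <;> rcases f <;> simp

lemma MCM : M * CNOT12 * M = CZ := by
  rw [mul_assoc, CM, ← mul_assoc, MM, one_mul]

/-- Toffoli–Pauli conjugation identity underlying homomorphic evaluation of the
Toffoli gate on a Pauli one-time-padded state in Mahadev's QFHE scheme. -/
theorem toffoli_pauli_conjugation (x₁ x₂ x₃ z₁ z₂ z₃ : Fin 2) :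
    Toffoli *
        ((PZ ^ (z₁ : ℕ) * PX ^ (x₁ : ℕ)) ⊗ₖ (PZ ^ (z₂ : ℕ) * PX ^ (x₂ : ℕ)) ⊗ₖ
          (PZ ^ (z₃ : ℕ) * PX ^ (x₃ : ℕ))) =
      CNOT13 ^ (x₂ : ℕ) * CNOT23 ^ (x₁ : ℕ) *
        ((1 : Matrix Bool Bool ℂ) ⊗ₖ PH ⊗ₖ (1 : Matrix Bool Bool ℂ)) *
        CNOT12 ^ (z₃ : ℕ) *
        ((1 : Matrix Bool Bool ℂ) ⊗ₖ PH ⊗ₖ (1 : Matrix Bool Bool ℂ)) *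
        ((PZ ^ ((z₁ : ℕ) + (x₂ : ℕ) * (z₃ : ℕ)) * PX ^ (x₁ : ℕ)) ⊗ₖ
          (PZ ^ ((z₂ : ℕ) + (x₁ : ℕ) * (z₃ : ℕ)) * PX ^ (x₂ : ℕ)) ⊗ₖ
          (PZ ^ (z₃ : ℕ) * PX ^ ((x₁ : ℕ) * (x₂ : ℕ) + (x₃ : ℕ)))) *
        Toffoli := by
  have hM : (1 : Matrix Bool Bool ℂ) ⊗ₖ PH ⊗ₖ (1 : Matrix Bool Bool ℂ) = M := rfl
  rw [hM]
  set X := CNOT13 ^ (x₂ : ℕ) * CNOT23 ^ (x₁ : ℕ) with hX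
  fin_cases z₃
  · simp only [Fin.isValue, Fin.val_zero, pow_zero, mul_one, mul_zero, add_zero]
    rw [mul_assoc X M M, MM, mul_one]
    rw [hX]
    fin_cases x₁ <;> fin_cases x₂ <;> fin_cases x₃ <;> fin_cases z₁ <;> fin_cases z₂ <;>
      simp only [Fin.isValue, Fin.val_zero, Fin.val_one, Nat.reduceMul, Nat.reduceAdd,
        pow_zero, pow_one, pow_two, PX_pm, PZ_pm, one_pm, Toffoli_pm, CNOT13_pm, CNOT23_pm,
        pm_mul, pm_kron, one_mul, mul_one] <;>
      exact pm_congr (by decide) (by decide)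
  · simp only [Fin.isValue, Fin.val_one, pow_one, mul_one]
    rw [mul_assoc (X * M) CNOT12 M, CM, ← mul_assoc (X * M) M CZ, mul_assoc X M M, MM, mul_one]
    rw [hX]
    fin_cases x₁ <;> fin_cases x₂ <;> fin_cases x₃ <;> fin_cases z₁ <;> fin_cases z₂ <;>
      simp only [Fin.isValue, Fin.val_zero, Fin.val_one, Nat.reduceMul, Nat.reduceAdd,
        pow_zero, pow_one, pow_two, PX_pm, PZ_pm, one_pm, Toffoli_pm, CNOT13_pm, CNOT23_pm, CZ,
        pm_mul, pm_kron, one_mul, mul_one] <;>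
      exact pm_congr (by decide) (by decide)
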